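/- arXiv:2602.16363 — 5 statements merged into one kernel-verified Lean document; each statement's English description precedes it below -/
import Mathlib

section
/- For any sequence of real numbers a_1, ..., a_n with each a_i in (0,1], the self-normalized sum satisfies: sum_{i=1}^n a_i / (1 + sum_{j=1}^{i-1} a_j) ≤ 2 log(1 + sum_{i=1}^n a_i). -/
/-!
With `S i = ∑_{j<i} a j`, each summand is at most `2 (log (1 + S (i+1)) - log (1 + S i))`, so the
sum telescopes. The termwise bound is `log (1 + t) ≥ t / (1 + t) ≥ t / 2` for `t = a i / (1 + S i) ∈ [0, 1]`.
-/

open Finset Real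

lemma div_le_two_mul_log_add_sub_log {b c : ℝ} (hc : 0 < c) (hb : 0 ≤ b) (hbc : b ≤ c) :
    b / c ≤ 2 * (log (c + b) - log c) := by
  have hcb : 0 < c + b := by linarith
  calc b / c ≤ 2 * (b / (c + b)) := by
        rw [div_le_iff₀ hc, mul_comm, ← mul_assoc, mul_div_assoc', le_div_iff₀ hcb]
        nlinarith
    _ = 2 * (1 - ((c + b) / c)⁻¹) := by field_simp; ring
    _ ≤ 2 * log ((c + b) / c) := by gcongr; exact one_sub_inv_le_log_of_pos (by positivity)
    _ = 2 * (log (c + b) - log c) := by rw [log_div hcb.ne' hc.ne']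

theorem sum_div_add_sum_range_le_two_mul_log_sub {c : ℝ} (hc : 0 < c) (a : ℕ → ℝ) (ha₀ : ∀ i, 0 ≤ a i)
    (ha : ∀ i, a i ≤ c) (n : ℕ) :
    ∑ i ∈ range n, a i / (c + ∑ j ∈ range i, a j)
      ≤ 2 * (log (c + ∑ i ∈ range n, a i) - log c) := by
  have hS : ∀ i, c ≤ c + ∑ j ∈ range i, a j := fun i =>
    le_add_of_nonneg_right (sum_nonneg fun j _ => ha₀ j)
  calc ∑ i ∈ range n, a i / (c + ∑ j ∈ range i, a j)
      ≤ ∑ i ∈ range n, 2 * (log (c + ∑ j ∈ range (i + 1), a j) - log (c + ∑ j ∈ range i, a j)) :=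
        sum_le_sum fun i _ => by
          rw [sum_range_succ, ← add_assoc]
          exact div_le_two_mul_log_add_sub_log (hc.trans_le (hS i)) (ha₀ i) ((ha i).trans (hS i))
    _ = 2 * (log (c + ∑ i ∈ range n, a i) - log c) := by
        rw [← mul_sum, sum_range_sub (fun i => log (c + ∑ j ∈ range i, a j)), sum_range_zero,
          add_zero]

/-- Self-normalized sum bound: for reals `a i ∈ (0,1]`,
`∑ i, a i / (1 + ∑_{j < i} a j) ≤ 2 log (1 + ∑ i a i)`. -/
theorem stmt_1 (n : ℕ) (a : ℕ → ℝ) (ha : ∀ i, 0 < a i ∧ a i ≤ 1) :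
    ∑ i ∈ Finset.range n, a i / (1 + ∑ j ∈ Finset.range i, a j)
      ≤ 2 * Real.log (1 + ∑ i ∈ Finset.range n, a i) := by
  simpa using sum_div_add_sum_range_le_two_mul_log_sub one_pos a (fun i => (ha i).1.le) (fun i => (ha i).2) n
end

section
/- For a finite-horizon MDP with horizon H, any policy π, and reward function r bounded by B ≥ 0 (i.e., 0 ≤ r_h(s,a) ≤ B for all s,a,h), the expected sum over steps h of the one-step conditional variances of the value function satisfies: E_π[ sum_{h=1}^H Var_{P_h(·|s_h,a_h)}(V^π_{h+1}) ] ≤ B H V^π_1(s_1), where the MDP starts from fixed state s_1. -/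
open Finset

/-!
Let `Φ h s = B (H + 1 - h) V_h(s) - V_h(s)²`, the Bhatia–Davis bound on the variance of a return
in `[0, B (H + 1 - h)]` with mean `V_h(s)`. Jensen in the action together with `0 ≤ r ≤ B` and
`0 ≤ P V_{h+1} ≤ B (H - h)` shows that the `π_h(·|s)`-average of `Var_P(V_{h+1})` is at most
`Φ h s` minus the `π_h, P`-average of `Φ (h + 1)`. Averaged over the occupancy measure these
bounds telescope to `Φ 1 s₁ ≤ B H V_1(s₁)`.
-/

lemma sum_mul_mem_Icc {ι : Type*} [Fintype ι] {w f : ι → ℝ} {lo hi : ℝ}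
    (hw0 : ∀ i, 0 ≤ w i) (hw1 : ∑ i, w i = 1) (hf : ∀ i, f i ∈ Set.Icc lo hi) :
    ∑ i, w i * f i ∈ Set.Icc lo hi :=
  (convex_Icc lo hi).sum_mem (fun i _ => hw0 i) hw1 (fun i _ => hf i)

lemma sq_sum_mul_le_sum_mul_sq {ι : Type*} [Fintype ι] {w f : ι → ℝ}
    (hw0 : ∀ i, 0 ≤ w i) (hw1 : ∑ i, w i = 1) :
    (∑ i, w i * f i) ^ 2 ≤ ∑ i, w i * f i ^ 2 :=
  (even_two.convexOn_pow (𝕜 := ℝ)).map_sum_le (fun i _ => hw0 i) hw1 fun _ _ => Set.mem_univ _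

lemma one_step_variance_le {S A : Type*} [Fintype S] [Fintype A]
    {w : A → ℝ} {p : A → S → ℝ} {r : A → ℝ} {v : S → ℝ} {B m V : ℝ}
    (hw0 : ∀ a, 0 ≤ w a) (hw1 : ∑ a, w a = 1)
    (hp0 : ∀ a s, 0 ≤ p a s) (hp1 : ∀ a, ∑ s, p a s = 1)
    (hr : ∀ a, r a ∈ Set.Icc 0 B) (hv : ∀ s, v s ∈ Set.Icc 0 m)
    (hV : V = ∑ a, w a * (r a + ∑ s, p a s * v s)) :
    ∑ a, w a * (∑ s, p a s * v s ^ 2 - (∑ s, p a s * v s) ^ 2) ≤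
      ∑ a, w a * ((m + B) * V - V ^ 2 - ∑ s, p a s * (m * v s - v s ^ 2)) := by
  set x : A → ℝ := fun a => ∑ s, p a s * v s
  set q : A → ℝ := fun a => ∑ s, p a s * v s ^ 2
  have hx : ∀ a, x a ∈ Set.Icc 0 m := fun a => sum_mul_mem_Icc (hp0 a) (hp1 a) hv
  have hpot : ∀ a, ∑ s, p a s * (m * v s - v s ^ 2) = m * x a - q a := fun a => by
    rw [mul_sum, ← sum_sub_distrib]
    exact sum_congr rfl fun s _ => by ring
  -- after Jensen in `a`, the gap is `r (B - r) + r (m - x) + x (B - r) ≥ 0`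
  have hpoint : ∀ a, w a * (q a - x a ^ 2) ≤
      w a * ((m + B) * (r a + x a) - (r a + x a) ^ 2 - (m * x a - q a)) := fun a => by
    obtain ⟨hr0, hrB⟩ := hr a
    obtain ⟨hx0, hxm⟩ := hx a
    refine mul_le_mul_of_nonneg_left ?_ (hw0 a)
    nlinarith [mul_nonneg hr0 (sub_nonneg.2 hrB), mul_nonneg hr0 (sub_nonneg.2 hxm),
      mul_nonneg hx0 (sub_nonneg.2 hrB)]
  have hjensen : V ^ 2 ≤ ∑ a, w a * (r a + x a) ^ 2 := hV ▸ sq_sum_mul_le_sum_mul_sq hw0 hw1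
  calc ∑ a, w a * (q a - x a ^ 2)
      ≤ ∑ a, w a * ((m + B) * (r a + x a) - (r a + x a) ^ 2 - (m * x a - q a)) :=
        sum_le_sum fun a _ => hpoint a
    _ = (m + B) * V - ∑ a, w a * (r a + x a) ^ 2 - ∑ a, w a * (m * x a - q a) := by
        rw [show V = ∑ a, w a * (r a + x a) from hV, mul_sum, ← sum_sub_distrib,
          ← sum_sub_distrib]
        exact sum_congr rfl fun a _ => by ring
    _ ≤ (m + B) * V - V ^ 2 - ∑ a, w a * (m * x a - q a) := by linarith
    _ = ∑ a, w a * ((m + B) * V - V ^ 2 - (m * x a - q a)) := by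
        simp only [mul_sub, sum_sub_distrib, ← sum_mul, hw1, one_mul]
    _ = ∑ a, w a * ((m + B) * V - V ^ 2 - ∑ s, p a s * (m * v s - v s ^ 2)) := by
        simp only [hpot]

section Occupancy

variable {S A : Type*} [Fintype S] [Fintype A] {H : ℕ}
  {P : ℕ → S → A → S → ℝ} {π μ : ℕ → S → A → ℝ} {s₁ : S}

lemma exists_occupancy_eq_mul [DecidableEq S]
    (hP0 : ∀ h s a s', 0 ≤ P h s a s') (hπ0 : ∀ h s a, 0 ≤ π h s a)
    (hμ1 : ∀ s a, μ 1 s a = (if s = s₁ then (1 : ℝ) else 0) * π 1 s a)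
    (hμ : ∀ h ∈ Icc 1 (H - 1), ∀ s' a',
      μ (h + 1) s' a' = (∑ s : S, ∑ a : A, μ h s a * P h s a s') * π (h + 1) s' a')
    {h : ℕ} (hh : h ∈ Icc 1 H) :
    ∃ ρ : S → ℝ, (∀ s, 0 ≤ ρ s) ∧ ∀ s a, μ h s a = ρ s * π h s a := by
  obtain ⟨h1, hH⟩ := mem_Icc.1 hh
  induction h, h1 using Nat.le_induction with
  | base => exact ⟨_, fun s => by split_ifs <;> norm_num, hμ1⟩
  | succ h h1 ih =>
    obtain ⟨ρ, hρ0, hρ⟩ := ih (mem_Icc.2 ⟨h1, by omega⟩) (by omega)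
    refine ⟨fun s' => ∑ s, ∑ a, μ h s a * P h s a s',
      fun s' => sum_nonneg fun s _ => sum_nonneg fun a _ => ?_, hμ h (mem_Icc.2 ⟨h1, by omega⟩)⟩
    rw [hρ]
    exact mul_nonneg (mul_nonneg (hρ0 s) (hπ0 h s a)) (hP0 h s a s')

lemma sum_occupancy_succ_mul
    (hπ1 : ∀ h s, ∑ a : A, π h s a = 1)
    (hμ : ∀ h ∈ Icc 1 (H - 1), ∀ s' a',
      μ (h + 1) s' a' = (∑ s : S, ∑ a : A, μ h s a * P h s a s') * π (h + 1) s' a')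
    {Φ : ℕ → S → ℝ} (hΦ : ∀ s, Φ (H + 1) s = 0) {h : ℕ} (hh : h ∈ Icc 1 H) :
    ∑ s, ∑ a, μ h s a * ∑ s', P h s a s' * Φ (h + 1) s' =
      ∑ s', ∑ a', μ (h + 1) s' a' * Φ (h + 1) s' := by
  obtain ⟨h1, hH⟩ := mem_Icc.1 hh
  rcases hH.lt_or_eq with hlt | rfl
  · simp only [hμ h (mem_Icc.2 ⟨h1, by omega⟩), mul_assoc, ← mul_sum, ← sum_mul, hπ1, one_mul]
    simp only [mul_sum, sum_mul, mul_assoc]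
    conv_rhs => rw [sum_comm]
    exact sum_congr rfl fun s _ => sum_comm
  · simp [hΦ]

lemma sum_occupancy_le_of_potential [DecidableEq S]
    (hP0 : ∀ h s a s', 0 ≤ P h s a s') (hπ0 : ∀ h s a, 0 ≤ π h s a)
    (hπ1 : ∀ h s, ∑ a : A, π h s a = 1)
    (hμ1 : ∀ s a, μ 1 s a = (if s = s₁ then (1 : ℝ) else 0) * π 1 s a)
    (hμ : ∀ h ∈ Icc 1 (H - 1), ∀ s' a',
      μ (h + 1) s' a' = (∑ s : S, ∑ a : A, μ h s a * P h s a s') * π (h + 1) s' a')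
    (Φ : ℕ → S → ℝ) (hΦ : ∀ s, Φ (H + 1) s = 0) (c : ℕ → S → A → ℝ)
    (hc : ∀ h ∈ Icc 1 H, ∀ s, ∑ a, π h s a * c h s a ≤
      ∑ a, π h s a * (Φ h s - ∑ s', P h s a s' * Φ (h + 1) s')) :
    ∑ h ∈ Icc 1 H, ∑ s, ∑ a, μ h s a * c h s a ≤ Φ 1 s₁ := by
  set D : ℕ → ℝ := fun h => ∑ s, ∑ a, μ h s a * Φ h s
  have hstep : ∀ h ∈ Icc 1 H, ∑ s, ∑ a, μ h s a * c h s a ≤ D h - D (h + 1) := by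
    intro h hh
    obtain ⟨ρ, hρ0, hρ⟩ := exists_occupancy_eq_mul hP0 hπ0 hμ1 hμ hh
    calc ∑ s, ∑ a, μ h s a * c h s a
        ≤ ∑ s, ∑ a, μ h s a * (Φ h s - ∑ s', P h s a s' * Φ (h + 1) s') := by
          simp only [hρ, mul_assoc, ← mul_sum]
          exact sum_le_sum fun s _ => mul_le_mul_of_nonneg_left (hc h hh s) (hρ0 s)
      _ = D h - D (h + 1) := by
          simp only [D, mul_sub, sum_sub_distrib, sum_occupancy_succ_mul hπ1 hμ hΦ hh]
  have hD1 : D 1 = Φ 1 s₁ := by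
    simp only [D, hμ1, mul_assoc, ← mul_sum, ← sum_mul, hπ1, one_mul]
    simp
  have hDend : D (H + 1) = 0 := by simp [D, hΦ]
  calc ∑ h ∈ Icc 1 H, ∑ s, ∑ a, μ h s a * c h s a
      ≤ ∑ h ∈ Icc 1 H, (D h - D (h + 1)) := sum_le_sum hstep
    _ = D 1 - D (H + 1) := by
        rw [← Ico_add_one_right_eq_Icc, ← neg_sub, ← sum_Ico_sub D (by omega), ← sum_neg_distrib]
        simp only [neg_sub]
    _ = Φ 1 s₁ := by rw [hD1, hDend, sub_zero]

end Occupancy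

lemma value_mem_Icc {S A : Type*} [Fintype S] [Fintype A] {H : ℕ}
    {P : ℕ → S → A → S → ℝ} {π r : ℕ → S → A → ℝ} {V : ℕ → S → ℝ} {B : ℝ}
    (hP0 : ∀ h s a s', 0 ≤ P h s a s') (hP1 : ∀ h s a, ∑ s' : S, P h s a s' = 1)
    (hπ0 : ∀ h s a, 0 ≤ π h s a) (hπ1 : ∀ h s, ∑ a : A, π h s a = 1)
    (hr : ∀ h s a, 0 ≤ r h s a ∧ r h s a ≤ B) (hVend : ∀ s, V (H + 1) s = 0)
    (hV : ∀ h ∈ Icc 1 H, ∀ s,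
      V h s = ∑ a : A, π h s a * (r h s a + ∑ s' : S, P h s a s' * V (h + 1) s'))
    {k : ℕ} (hk : k ≤ H) (s : S) :
    V (H + 1 - k) s ∈ Set.Icc 0 (B * k) := by
  induction k generalizing s with
  | zero => simp [hVend]
  | succ k ih =>
    have hnext : H + 1 - (k + 1) + 1 = H + 1 - k := by omega
    rw [hV _ (mem_Icc.2 ⟨by omega, by omega⟩), hnext, Nat.cast_succ, mul_add_one, add_comm]
    refine sum_mul_mem_Icc (hπ0 _ s) (hπ1 _ s) fun a => ?_
    have hPV := sum_mul_mem_Icc (hP0 (H + 1 - (k + 1)) s a) (hP1 _ s a) (ih (by omega))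
    exact ⟨add_nonneg (hr _ s a).1 hPV.1, add_le_add (hr _ s a).2 hPV.2⟩

theorem stmt_4_general {S A : Type*} [Fintype S] [DecidableEq S] [Fintype A]
    (H : ℕ)
    (P : ℕ → S → A → S → ℝ)
    (hPnonneg : ∀ h s a s', 0 ≤ P h s a s')
    (hPsum : ∀ h s a, ∑ s' : S, P h s a s' = 1)
    (π : ℕ → S → A → ℝ)
    (hπnonneg : ∀ h s a, 0 ≤ π h s a)
    (hπsum : ∀ h s, ∑ a : A, π h s a = 1)
    (B : ℝ)
    (r : ℕ → S → A → ℝ)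
    (hr : ∀ h s a, 0 ≤ r h s a ∧ r h s a ≤ B)
    (s₁ : S)
    (V : ℕ → S → ℝ)
    (hVend : ∀ s, V (H + 1) s = 0)
    (hV : ∀ h ∈ Finset.Icc 1 H, ∀ s,
      V h s = ∑ a : A, π h s a * (r h s a + ∑ s' : S, P h s a s' * V (h + 1) s'))
    (μ : ℕ → S → A → ℝ)
    (hμ1 : ∀ s a, μ 1 s a = (if s = s₁ then (1 : ℝ) else 0) * π 1 s a)
    (hμ : ∀ h ∈ Finset.Icc 1 (H - 1), ∀ s' a',
      μ (h + 1) s' a' = (∑ s : S, ∑ a : A, μ h s a * P h s a s') * π (h + 1) s' a') :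
    ∑ h ∈ Finset.Icc 1 H, ∑ s : S, ∑ a : A,
        μ h s a *
          ((∑ s' : S, P h s a s' * (V (h + 1) s') ^ 2) -
            (∑ s' : S, P h s a s' * V (h + 1) s') ^ 2)
      ≤ B * H * V 1 s₁ := by
  set Φ : ℕ → S → ℝ := fun h s => B * (H + 1 - h : ℕ) * V h s - V h s ^ 2
  have hΦend : ∀ s, Φ (H + 1) s = 0 := fun s => by simp [Φ, hVend]
  calc _ ≤ Φ 1 s₁ := sum_occupancy_le_of_potential hPnonneg hπnonneg hπsum hμ1 hμ Φ hΦend _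
        fun h hh s => ?_
    _ ≤ B * H * V 1 s₁ := by simp only [Φ, Nat.add_sub_cancel]; exact sub_le_self _ (sq_nonneg _)
  have hhH := (mem_Icc.1 hh).2
  have hnext : ∀ s', V (h + 1) s' ∈ Set.Icc 0 (B * (H - h : ℕ)) := fun s' => by
    simpa [show H + 1 - (H - h) = h + 1 by omega] using
      value_mem_Icc hPnonneg hPsum hπnonneg hπsum hr hVend hV (Nat.sub_le H h) s'
  convert one_step_variance_le (hπnonneg h s) (hπsum h s) (hPnonneg h s) (hPsum h s)
    (fun a => hr h s a) hnext (hV h hh s) using 4 with a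
  · simp only [Φ, show H + 1 - h = H - h + 1 by omega]
    push_cast
    ring
  · simp only [Φ, show H + 1 - (h + 1) = H - h by omega]

/-- Expected sum of one-step conditional variances of the value function is bounded by
`B * H * V^π_1(s₁)`, for rewards in `[0, B]`.  The trajectory expectation is written using
the occupancy measure `μ` of policy `π` started at `s₁`. -/
theorem stmt_4 {S A : Type*} [Fintype S] [DecidableEq S] [Fintype A]
    (H : ℕ) (hH : 1 ≤ H)
    (P : ℕ → S → A → S → ℝ)
    (hPnonneg : ∀ h s a s', 0 ≤ P h s a s')
    (hPsum : ∀ h s a, ∑ s' : S, P h s a s' = 1)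
    (π : ℕ → S → A → ℝ)
    (hπnonneg : ∀ h s a, 0 ≤ π h s a)
    (hπsum : ∀ h s, ∑ a : A, π h s a = 1)
    (B : ℝ) (hB : 0 ≤ B)
    (r : ℕ → S → A → ℝ)
    (hr : ∀ h s a, 0 ≤ r h s a ∧ r h s a ≤ B)
    (s₁ : S)
    (V : ℕ → S → ℝ)
    (hVend : ∀ s, V (H + 1) s = 0)
    (hV : ∀ h ∈ Finset.Icc 1 H, ∀ s,
      V h s = ∑ a : A, π h s a * (r h s a + ∑ s' : S, P h s a s' * V (h + 1) s'))
    (μ : ℕ → S → A → ℝ)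
    (hμ1 : ∀ s a, μ 1 s a = (if s = s₁ then (1 : ℝ) else 0) * π 1 s a)
    (hμ : ∀ h ∈ Finset.Icc 1 (H - 1), ∀ s' a',
      μ (h + 1) s' a' = (∑ s : S, ∑ a : A, μ h s a * P h s a s') * π (h + 1) s' a') :
    ∑ h ∈ Finset.Icc 1 H, ∑ s : S, ∑ a : A,
        μ h s a *
          ((∑ s' : S, P h s a s' * (V (h + 1) s') ^ 2) -
            (∑ s' : S, P h s a s' * V (h + 1) s') ^ 2)
      ≤ B * H * V 1 s₁ :=
  stmt_4_general H P hPnonneg hPsum π hπnonneg hπsum B r hr s₁ V hVend hV μ hμ1 hμ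
end

section
/- Let P be a probability distribution over a finite set S, V: S → ℝ with ‖V‖_∞ ≤ H, and let V̂, V* : S → ℝ satisfy V̂(s') ≤ V*(s') ≤ H for all s', with V̂, V* ≥ 0. Then for any Y ≥ 0 and N > 0: sqrt( Y · Var_P(V̂ - V*) / N ) ≤ Y H² / (2N) + (1/H) · sum_{s'} P(s') (V*(s') - V̂(s')). -/
open Finset

/-- Variance-difference bound via AM-GM: for `0 ≤ V̂ ≤ V⋆ ≤ H`,
`√(Y · Var_P(V̂ - V⋆) / N) ≤ Y H² / (2N) + (1/H) ∑_{s'} P s' (V⋆ s' - V̂ s')`. -/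
theorem stmt_5 {S : Type*} [Fintype S]
    (P : S → ℝ) (hPnonneg : ∀ s, 0 ≤ P s) (hPsum : ∑ s : S, P s = 1)
    (H : ℝ) (hH : 0 < H)
    (Vhat Vstar : S → ℝ)
    (hbounds : ∀ s, 0 ≤ Vhat s ∧ Vhat s ≤ Vstar s ∧ Vstar s ≤ H)
    (Y N : ℝ) (hY : 0 ≤ Y) (hN : 0 < N) :
    Real.sqrt (Y *
        ((∑ s : S, P s * (Vhat s - Vstar s) ^ 2) -
          (∑ s : S, P s * (Vhat s - Vstar s)) ^ 2) / N)
      ≤ Y * H ^ 2 / (2 * N) + (1 / H) * ∑ s : S, P s * (Vstar s - Vhat s) := by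
  set E : ℝ := ∑ s : S, P s * (Vstar s - Vhat s) with hE
  have hEnonneg : 0 ≤ E := Finset.sum_nonneg fun s _ =>
    mul_nonneg (hPnonneg s) (by linarith [(hbounds s).2.1])
  have hsq : (∑ s : S, P s * (Vhat s - Vstar s) ^ 2) ≤ H * E := by
    rw [hE, Finset.mul_sum]
    apply Finset.sum_le_sum
    intro s _
    have h1 := (hbounds s).1
    have h2 := (hbounds s).2.1
    have h3 := (hbounds s).2.2
    have : (Vhat s - Vstar s) ^ 2 ≤ H * (Vstar s - Vhat s) := by nlinarith
    calc P s * (Vhat s - Vstar s) ^ 2 ≤ P s * (H * (Vstar s - Vhat s)) :=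
          mul_le_mul_of_nonneg_left this (hPnonneg s)
      _ = H * (P s * (Vstar s - Vhat s)) := by ring
  have hinner : Y * ((∑ s : S, P s * (Vhat s - Vstar s) ^ 2) -
      (∑ s : S, P s * (Vhat s - Vstar s)) ^ 2) / N ≤ (Y * H ^ 2 / N) * (E / H) := by
    have hsub : (∑ s : S, P s * (Vhat s - Vstar s) ^ 2) -
        (∑ s : S, P s * (Vhat s - Vstar s)) ^ 2 ≤ H * E := by
      nlinarith [sq_nonneg (∑ s : S, P s * (Vhat s - Vstar s))]
    have : Y * ((∑ s : S, P s * (Vhat s - Vstar s) ^ 2) -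
        (∑ s : S, P s * (Vhat s - Vstar s)) ^ 2) ≤ Y * (H * E) :=
      mul_le_mul_of_nonneg_left hsub hY
    rw [div_le_iff₀ hN] at *
    calc Y * ((∑ s : S, P s * (Vhat s - Vstar s) ^ 2) -
          (∑ s : S, P s * (Vhat s - Vstar s)) ^ 2) ≤ Y * (H * E) := this
      _ = Y * H ^ 2 / N * (E / H) * N := by field_simp
  set A : ℝ := Y * H ^ 2 / N with hA
  set B : ℝ := E / H with hB
  have hAnn : 0 ≤ A := div_nonneg (mul_nonneg hY (sq_nonneg H)) hN.le
  have hBnn : 0 ≤ B := div_nonneg hEnonneg hH.le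
  have h1 : Real.sqrt (Y * ((∑ s : S, P s * (Vhat s - Vstar s) ^ 2) -
      (∑ s : S, P s * (Vhat s - Vstar s)) ^ 2) / N) ≤ Real.sqrt (A * B) :=
    Real.sqrt_le_sqrt hinner
  have h2 : Real.sqrt (A * B) ≤ (A + B) / 2 := by
    have : A * B ≤ ((A + B) / 2) ^ 2 := by nlinarith [sq_nonneg (A - B)]
    calc Real.sqrt (A * B) ≤ Real.sqrt (((A + B) / 2) ^ 2) := Real.sqrt_le_sqrt this
      _ = (A + B) / 2 := Real.sqrt_sq (by linarith)
  have h3 : (A + B) / 2 ≤ Y * H ^ 2 / (2 * N) + (1 / H) * E := by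
    rw [hA, hB]
    have : E / H / 2 ≤ 1 / H * E := by
      rw [div_div, one_div, inv_mul_eq_div]
      exact div_le_div_of_nonneg_left hEnonneg (by positivity) (by nlinarith)
    have hA2 : Y * H ^ 2 / N / 2 = Y * H ^ 2 / (2 * N) := by ring
    linarith [add_div (Y * H ^ 2 / N) (E / H) 2, hA2, this]
  linarith
end

section
/- (Pessimistic value iteration lower-bounds the true value.) Consider an MDP with finite S, A, horizon H, true transitions P, reward r, estimated transitions P̂, and penalties b_h(s,a) ≥ 0 satisfying |(P̂_{h,s,a} - P_{h,s,a}) V̂_{h+1}| ≤ b_h(s,a) for all s,a,h, where V̂ and Q̂ are defined by backward recursion: V̂_{H+1} = 0, Q̂_h(s,a) = max{ r_h(s,a) + P̂_{h,s,a} V̂_{h+1} - b_h(s,a), 0 }, V̂_h(s) = max_a Q̂_h(s,a), and π̂_h(s) = argmax_a Q̂_h(s,a). Then for all s, a, h: Q̂_h(s,a) ≤ Q^{π̂}_h(s,a) and V̂_h(s) ≤ V^{π̂}_h(s), where Q^{π̂} and V^{π̂} are the true action-value and value functions of policy π̂ under P and r. -/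
open Finset

/-- Pessimistic value iteration lower-bounds the true value of the greedy policy:
`Q̂_h(s,a) ≤ Q^{π̂}_h(s,a)` and `V̂_h(s) ≤ V^{π̂}_h(s)`. -/
theorem stmt_6 {S A : Type*} [Fintype S] [Fintype A]
    (H : ℕ)
    (P Phat : ℕ → S → A → S → ℝ)
    (hPnonneg : ∀ h s a s', 0 ≤ P h s a s')
    (hPsum : ∀ h s a, ∑ s' : S, P h s a s' = 1)
    (hPhatnonneg : ∀ h s a s', 0 ≤ Phat h s a s')
    (hPhatsum : ∀ h s a, ∑ s' : S, Phat h s a s' = 1)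
    (r : ℕ → S → A → ℝ) (hr : ∀ h s a, 0 ≤ r h s a ∧ r h s a ≤ 1)
    (b : ℕ → S → A → ℝ) (hb : ∀ h s a, 0 ≤ b h s a)
    -- pessimistic backward recursion
    (Qhat : ℕ → S → A → ℝ) (Vhat : ℕ → S → ℝ)
    (hVhatEnd : ∀ s, Vhat (H + 1) s = 0)
    (hQhat : ∀ h ∈ Finset.Icc 1 H, ∀ s a,
      Qhat h s a =
        max (r h s a + (∑ s' : S, Phat h s a s' * Vhat (h + 1) s') - b h s a) 0)
    (πhat : ℕ → S → A)
    (hargmax : ∀ h ∈ Finset.Icc 1 H, ∀ s a, Qhat h s a ≤ Qhat h s (πhat h s))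
    (hVhat : ∀ h ∈ Finset.Icc 1 H, ∀ s, Vhat h s = Qhat h s (πhat h s))
    -- true value functions of π̂
    (Qpi : ℕ → S → A → ℝ) (Vpi : ℕ → S → ℝ)
    (hVpiEnd : ∀ s, Vpi (H + 1) s = 0)
    (hQpi : ∀ h ∈ Finset.Icc 1 H, ∀ s a,
      Qpi h s a = r h s a + ∑ s' : S, P h s a s' * Vpi (h + 1) s')
    (hVpi : ∀ h ∈ Finset.Icc 1 H, ∀ s, Vpi h s = Qpi h s (πhat h s))
    -- concentration condition
    (hconc : ∀ h ∈ Finset.Icc 1 H, ∀ s a,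
      |(∑ s' : S, (Phat h s a s' - P h s a s') * Vhat (h + 1) s')| ≤ b h s a) :
    (∀ h ∈ Finset.Icc 1 H, ∀ s a, Qhat h s a ≤ Qpi h s a) ∧
      (∀ h ∈ Finset.Icc 1 (H + 1), ∀ s, Vhat h s ≤ Vpi h s) := by

  have key : ∀ k h, h + k = H + 1 → 1 ≤ h →
      ((∀ s, 0 ≤ Vpi h s) ∧ (h ≤ H → ∀ s a, Qhat h s a ≤ Qpi h s a) ∧ (∀ s, Vhat h s ≤ Vpi h s)) := by
    intro k
    induction k with
    | zero =>
      intro h hk _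
      simp only [Nat.add_zero] at hk
      subst hk
      exact ⟨fun s => by simp [hVpiEnd], fun hle => absurd hle (by omega),
        fun s => by simp [hVhatEnd, hVpiEnd]⟩
    | succ k ih =>
      intro h hk h1
      have hmem : h ∈ Finset.Icc 1 H := by
        simp only [Finset.mem_Icc]; omega
      have ih' := ih (h + 1) (by omega) (by omega)
      obtain ⟨ihpos, _, ihle⟩ := ih'
      have hQle : ∀ s a, Qhat h s a ≤ Qpi h s a := by
        intro s a
        have hQpipos : 0 ≤ Qpi h s a := by
          rw [hQpi h hmem]
          have : 0 ≤ ∑ s' : S, P h s a s' * Vpi (h + 1) s' :=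
            Finset.sum_nonneg fun s' _ => mul_nonneg (hPnonneg h s a s') (ihpos s')
          linarith [(hr h s a).1]
        rw [hQhat h hmem]
        refine max_le ?_ hQpipos
        have h1' : (∑ s' : S, Phat h s a s' * Vhat (h + 1) s')
            - (∑ s' : S, P h s a s' * Vhat (h + 1) s')
            = ∑ s' : S, (Phat h s a s' - P h s a s') * Vhat (h + 1) s' := by
          rw [← Finset.sum_sub_distrib]
          congr 1; ext s'; ring
        have h2 : (∑ s' : S, Phat h s a s' * Vhat (h + 1) s')
            - (∑ s' : S, P h s a s' * Vhat (h + 1) s') ≤ b h s a := by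
          rw [h1']
          exact (abs_le.mp (hconc h hmem s a)).2
        have h3 : (∑ s' : S, P h s a s' * Vhat (h + 1) s')
            ≤ ∑ s' : S, P h s a s' * Vpi (h + 1) s' :=
          Finset.sum_le_sum fun s' _ => mul_le_mul_of_nonneg_left (ihle s') (hPnonneg h s a s')
        rw [hQpi h hmem]
        linarith
      refine ⟨fun s => ?_, fun _ => hQle, fun s => ?_⟩
      · rw [hVpi h hmem, hQpi h hmem]
        have : 0 ≤ ∑ s' : S, P h s (πhat h s) s' * Vpi (h + 1) s' :=
          Finset.sum_nonneg fun s' _ => mul_nonneg (hPnonneg _ _ _ _) (ihpos s')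
        linarith [(hr h s (πhat h s)).1]
      · rw [hVhat h hmem, hVpi h hmem]
        exact hQle s (πhat h s)
  constructor
  · intro h hmem s a
    have h' := Finset.mem_Icc.mp hmem
    exact (key (H + 1 - h) h (by omega) h'.1).2.1 h'.2 s a
  · intro h hmem s
    have h' := Finset.mem_Icc.mp hmem
    exact (key (H + 1 - h) h (by omega) h'.1).2.2 s
end

section
/- (Per-step suboptimality decomposition under pessimism.) Under the same setup and concentration condition as the pessimistic value iteration lemma, for every state s and step h: V*_h(s) - V̂_h(s) ≤ P_{h,s,π*_h(s)} (V*_{h+1} - V̂_{h+1}) + 2 b_h(s, π*_h(s)), where π* is an optimal policy and V* its value function. -/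
open Finset

/-- Per-step suboptimality decomposition under pessimism:
`V⋆_h(s) - V̂_h(s) ≤ P_{h,s,π⋆_h(s)} (V⋆_{h+1} - V̂_{h+1}) + 2 b_h(s, π⋆_h(s))`. -/
theorem stmt_7 {S A : Type*} [Fintype S] [Fintype A]
    (H : ℕ)
    (P Phat : ℕ → S → A → S → ℝ)
    (hPnonneg : ∀ h s a s', 0 ≤ P h s a s')
    (hPsum : ∀ h s a, ∑ s' : S, P h s a s' = 1)
    (hPhatnonneg : ∀ h s a s', 0 ≤ Phat h s a s')
    (hPhatsum : ∀ h s a, ∑ s' : S, Phat h s a s' = 1)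
    (r : ℕ → S → A → ℝ) (hr : ∀ h s a, 0 ≤ r h s a ∧ r h s a ≤ 1)
    (b : ℕ → S → A → ℝ) (hb : ∀ h s a, 0 ≤ b h s a)
    -- pessimistic backward recursion
    (Qhat : ℕ → S → A → ℝ) (Vhat : ℕ → S → ℝ)
    (hVhatEnd : ∀ s, Vhat (H + 1) s = 0)
    (hQhat : ∀ h ∈ Finset.Icc 1 H, ∀ s a,
      Qhat h s a =
        max (r h s a + (∑ s' : S, Phat h s a s' * Vhat (h + 1) s') - b h s a) 0)
    (πhat : ℕ → S → A)
    (hargmax : ∀ h ∈ Finset.Icc 1 H, ∀ s a, Qhat h s a ≤ Qhat h s (πhat h s))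
    (hVhat : ∀ h ∈ Finset.Icc 1 H, ∀ s, Vhat h s = Qhat h s (πhat h s))
    -- optimal policy and its value functions
    (πstar : ℕ → S → A)
    (Qstar : ℕ → S → A → ℝ) (Vstar : ℕ → S → ℝ)
    (hVstarEnd : ∀ s, Vstar (H + 1) s = 0)
    (hQstar : ∀ h ∈ Finset.Icc 1 H, ∀ s a,
      Qstar h s a = r h s a + ∑ s' : S, P h s a s' * Vstar (h + 1) s')
    (hVstar : ∀ h ∈ Finset.Icc 1 H, ∀ s, Vstar h s = Qstar h s (πstar h s))
    (hopt : ∀ h ∈ Finset.Icc 1 H, ∀ s a, Qstar h s a ≤ Qstar h s (πstar h s))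
    -- concentration condition
    (hconc : ∀ h ∈ Finset.Icc 1 H, ∀ s a,
      |(∑ s' : S, (Phat h s a s' - P h s a s') * Vhat (h + 1) s')| ≤ b h s a) :
    ∀ h ∈ Finset.Icc 1 H, ∀ s,
      Vstar h s - Vhat h s ≤
        (∑ s' : S, P h s (πstar h s) s' * (Vstar (h + 1) s' - Vhat (h + 1) s'))
          + 2 * b h s (πstar h s) := by
  intro h hh s
  set a := πstar h s with ha
  have hQle : r h s a + (∑ s' : S, Phat h s a s' * Vhat (h + 1) s') - b h s a ≤ Vhat h s := by
    calc r h s a + (∑ s' : S, Phat h s a s' * Vhat (h + 1) s') - b h s a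
        ≤ Qhat h s a := by rw [hQhat h hh s a]; exact le_max_left _ _
      _ ≤ Qhat h s (πhat h s) := hargmax h hh s a
      _ = Vhat h s := (hVhat h hh s).symm
  have hV : Vstar h s = r h s a + ∑ s' : S, P h s a s' * Vstar (h + 1) s' := by
    rw [hVstar h hh s, hQstar h hh s a]
  have hconc' : (∑ s' : S, (P h s a s' - Phat h s a s') * Vhat (h + 1) s') ≤ b h s a := by
    have := hconc h hh s a
    have h2 : (∑ s' : S, (P h s a s' - Phat h s a s') * Vhat (h + 1) s')
        = -(∑ s' : S, (Phat h s a s' - P h s a s') * Vhat (h + 1) s') := by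
      rw [← Finset.sum_neg_distrib]
      apply Finset.sum_congr rfl; intro x _; ring
    rw [h2]
    linarith [neg_abs_le (∑ s' : S, (Phat h s a s' - P h s a s') * Vhat (h + 1) s')]
  have key : (∑ s' : S, P h s a s' * Vstar (h + 1) s')
      - (∑ s' : S, Phat h s a s' * Vhat (h + 1) s')
      = (∑ s' : S, P h s a s' * (Vstar (h + 1) s' - Vhat (h + 1) s'))
        + (∑ s' : S, (P h s a s' - Phat h s a s') * Vhat (h + 1) s') := by
    rw [← Finset.sum_sub_distrib, ← Finset.sum_add_distrib]
    apply Finset.sum_congr rfl; intro x _; ring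
  linarith
end
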